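/- Let n ≥ 1, 0 ≤ α < π/2, let A, B ∈ Mₙ(ℂ) satisfy A, B ∈ S_α, and let t ∈ (0,1). Then cos(α)·w(AB)^{1/2} ≤ H_t(w(A), w(B)), where H_t(w(A), w(B)) := (w(A)^{1−t}w(B)^t + w(A)^t w(B)^{1−t})/2. -/

import Mathlib

open Matrix MeasureTheory
open scoped ComplexOrder

attribute [local instance] Matrix.normedAddCommGroup Matrix.normedSpace

/-- The numerical radius of a complex `n × n` matrix. -/
noncomputable def nradius {n : ℕ} (A : Matrix (Fin n) (Fin n) ℂ) : ℝ :=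
  sSup {r : ℝ | ∃ x : EuclideanSpace ℂ (Fin n), ‖x‖ = 1 ∧
    r = ‖(inner ℂ x (Matrix.toEuclideanCLM (𝕜 := ℂ) A x) : ℂ)‖}

/-- The operator (spectral) norm of a complex `n × n` matrix. -/
noncomputable def opNorm {n : ℕ} (A : Matrix (Fin n) (Fin n) ℂ) : ℝ :=
  ‖(Matrix.toEuclideanCLM (𝕜 := ℂ) A :
      EuclideanSpace ℂ (Fin n) →L[ℂ] EuclideanSpace ℂ (Fin n))‖

/-- The real part `(A + Aᴴ)/2` of a matrix. -/
noncomputable def matRe {n : ℕ} (A : Matrix (Fin n) (Fin n) ℂ) : Matrix (Fin n) (Fin n) ℂ :=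
  (1 / 2 : ℂ) • (A + Aᴴ)

/-- `A ∈ S_α` : `Re A` is positive definite and the numerical range of `A` lies in the
sector `{z : |Im z| ≤ tan α · Re z}`. -/
def InSector {n : ℕ} (α : ℝ) (A : Matrix (Fin n) (Fin n) ℂ) : Prop :=
  (matRe A).PosDef ∧ ∀ x : EuclideanSpace ℂ (Fin n), ‖x‖ = 1 →
    |(inner ℂ x (Matrix.toEuclideanCLM (𝕜 := ℂ) A x) : ℂ).im| ≤
      Real.tan α * ((inner ℂ x (Matrix.toEuclideanCLM (𝕜 := ℂ) A x) : ℂ)).re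

/-- The Beta-type probability measure on `(0,1)` with density
`(sin (t π) / π) · s^(t-1) · (1-s)^(-t)` with respect to Lebesgue measure. -/
noncomputable def betaMeasure (t : ℝ) : Measure ℝ :=
  (volume.restrict (Set.Ioo (0 : ℝ) 1)).withDensity fun s =>
    ENNReal.ofReal (Real.sin (t * Real.pi) / Real.pi * s ^ (t - 1) * (1 - s) ^ (-t))

/-- The weighted geometric mean `A ♯_t B = ∫₀¹ ((1-s)A⁻¹ + sB⁻¹)⁻¹ dμ_t(s)`. -/
noncomputable def geomMean {n : ℕ} (A B : Matrix (Fin n) (Fin n) ℂ) (t : ℝ) :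
    Matrix (Fin n) (Fin n) ℂ :=
  ∫ s, ((1 - s) • A⁻¹ + s • B⁻¹)⁻¹ ∂(betaMeasure t)

/-- The Heinz mean `H_t(A,B) = (A ♯_t B + A ♯_{1-t} B)/2` of matrices. -/
noncomputable def heinzMat {n : ℕ} (A B : Matrix (Fin n) (Fin n) ℂ) (t : ℝ) :
    Matrix (Fin n) (Fin n) ℂ :=
  (1 / 2 : ℂ) • (geomMean A B t + geomMean A B (1 - t))

/-- The Heinz mean `H_t(a,b) = (a^{1-t}b^t + a^t b^{1-t})/2` of positive reals. -/
noncomputable def heinzScal (a b t : ℝ) : ℝ :=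
  (a ^ (1 - t) * b ^ t + a ^ t * b ^ (1 - t)) / 2

/-!
Write `ℜ A = P²` with `P` positive and invertible; then `A = P (1 + i K) P` with
`K = P⁻¹ (ℑ A) P⁻¹` self-adjoint, and the sector condition at `x = P⁻¹ y` reads
`|⟪y, K y⟫| ≤ tan α ‖y‖²`. Hence `‖K‖ ≤ tan α`, `‖1 + i K‖ ≤ √(1 + tan² α) = 1 / cos α`, and
`cos α ‖A‖ ≤ ‖P‖² = ‖ℜ A‖ ≤ w(A)`. Consequently `cos² α w(AB) ≤ cos² α ‖A‖ ‖B‖ ≤ w(A) w(B)`, and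
`√(w(A) w(B))` is at most the Heinz mean by AM-GM, the two terms of the Heinz mean having
product `w(A) w(B)`.
-/

section InnerProduct
open RCLike
variable {𝕜 E : Type*} [RCLike 𝕜] [NormedAddCommGroup E] [InnerProductSpace 𝕜 E]
local notation "⟪" x ", " y "⟫" => inner 𝕜 x y

lemma IsSelfAdjoint.norm_le_of_abs_re_inner_le [CompleteSpace E] {T : E →L[𝕜] E}
    (hT : IsSelfAdjoint T) {c : ℝ} (hc : 0 ≤ c) (h : ∀ x, |re ⟪x, T x⟫| ≤ c * ‖x‖ ^ 2) :
    ‖T‖ ≤ c := by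
  rw [T.norm_eq_iSup_rayleighQuotient hT.isSymmetric]
  refine ciSup_le fun x => ?_
  rw [ContinuousLinearMap.rayleighQuotient, ContinuousLinearMap.reApplyInnerSelf_apply,
    inner_re_symm, abs_div, abs_sq]
  exact div_le_of_le_mul₀ (sq_nonneg _) hc (h x)

lemma norm_inner_map_self_le_opNorm (T : E →L[𝕜] E) {x : E} (hx : ‖x‖ = 1) : ‖⟪x, T x⟫‖ ≤ ‖T‖ :=
  calc ‖⟪x, T x⟫‖ ≤ ‖x‖ * ‖T x‖ := norm_inner_le_norm _ _
    _ ≤ ‖x‖ * (‖T‖ * ‖x‖) := by gcongr; exact T.le_opNorm x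
    _ = ‖T‖ := by rw [hx, one_mul, mul_one]

lemma exists_norm_eq_one_inner_map_self_eq (T : E →L[𝕜] E) {x : E} (hx : x ≠ 0) :
    ∃ u : E, ‖u‖ = 1 ∧ ⟪x, T x⟫ = (‖x‖ ^ 2) • ⟪u, T u⟫ := by
  refine ⟨(‖x‖⁻¹ : 𝕜) • x, norm_smul_inv_norm hx, ?_⟩
  have : (‖x‖ : 𝕜) ≠ 0 := by simpa using hx
  simp only [map_smul, inner_smul_left, inner_smul_right, map_inv₀, conj_ofReal,
    real_smul_eq_coe_mul]
  field_simp
  push_cast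
  ring

end InnerProduct

section ComplexHilbert
open Complex ComplexStarModule
variable {H : Type*} [NormedAddCommGroup H] [InnerProductSpace ℂ H] [CompleteSpace H]
local notation "⟪" x ", " y "⟫" => inner ℂ x y

lemma inner_map_self_eq_realPart_add_I_mul_imaginaryPart (T : H →L[ℂ] H) (x : H) :
    ⟪x, T x⟫ = ⟪x, (ℜ T : H →L[ℂ] H) x⟫ + I * ⟪x, (ℑ T : H →L[ℂ] H) x⟫ := by
  conv_lhs => rw [← realPart_add_I_smul_imaginaryPart T]
  simp

lemma re_inner_map_self_realPart (T : H →L[ℂ] H) (x : H) :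
    (⟪x, (ℜ T : H →L[ℂ] H) x⟫).re = (⟪x, T x⟫).re := by
  have : (⟪x, (ℑ T : H →L[ℂ] H) x⟫).im = 0 := (ℑ T).2.isSymmetric.im_inner_self_apply x
  simp [inner_map_self_eq_realPart_add_I_mul_imaginaryPart T x, this]

lemma re_inner_map_self_imaginaryPart (T : H →L[ℂ] H) (x : H) :
    (⟪x, (ℑ T : H →L[ℂ] H) x⟫).re = (⟪x, T x⟫).im := by
  have : (⟪x, (ℜ T : H →L[ℂ] H) x⟫).im = 0 := (ℜ T).2.isSymmetric.im_inner_self_apply x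
  simp [inner_map_self_eq_realPart_add_I_mul_imaginaryPart T x, this]

lemma norm_one_add_I_smul_le {A : Type*} [CStarAlgebra A] {k : A} (hk : IsSelfAdjoint k) :
    ‖1 + I • k‖ ≤ √(1 + ‖k‖ ^ 2) := by
  nontriviality A
  have hstar : star (1 + I • k) * (1 + I • k) = 1 + k * k := by
    rw [star_add, star_one, star_smul, hk.star_eq, Complex.star_def, conj_I]
    simp only [add_mul, mul_add, one_mul, mul_one, smul_mul_smul_comm, neg_mul, I_mul_I]
    module
  apply Real.le_sqrt_of_sq_le
  calc ‖1 + I • k‖ ^ 2 = ‖1 + k * k‖ := by rw [sq, ← CStarRing.norm_star_mul_self, hstar]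
    _ ≤ 1 + ‖k‖ ^ 2 := by
      grw [norm_add_le, CStarRing.norm_one, norm_mul_le, sq]

lemma norm_realPart_le_of_norm_inner_le {T : H →L[ℂ] H} {w : ℝ} (hw : 0 ≤ w)
    (h : ∀ x, ‖⟪x, T x⟫‖ ≤ w * ‖x‖ ^ 2) : ‖(ℜ T : H →L[ℂ] H)‖ ≤ w := by
  have hR : IsSelfAdjoint (ℜ T : H →L[ℂ] H) := (ℜ T).2
  refine hR.norm_le_of_abs_re_inner_le hw fun x => ?_
  rw [RCLike.re_to_complex, re_inner_map_self_realPart]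
  exact (Complex.abs_re_le_norm _).trans (h x)

lemma norm_le_sqrt_one_add_sq_mul_norm_realPart {T : H →L[ℂ] H}
    (hR : IsStrictlyPositive (ℜ T : H →L[ℂ] H)) {c : ℝ} (hc : 0 ≤ c)
    (hsec : ∀ x, |(⟪x, T x⟫).im| ≤ c * (⟪x, T x⟫).re) :
    ‖T‖ ≤ √(1 + c ^ 2) * ‖(ℜ T : H →L[ℂ] H)‖ := by
  set R : H →L[ℂ] H := ↑(ℜ T)
  set S : H →L[ℂ] H := ↑(ℑ T)
  set P := CFC.sqrt R
  set Q := Ring.inverse P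
  set K := Q * S * Q
  have hP : IsStrictlyPositive P := hR.sqrt
  have hPQ : P * Q = 1 := Ring.mul_inverse_cancel P hP.isUnit
  have hQP : Q * P = 1 := Ring.inverse_mul_cancel P hP.isUnit
  have hPP : P * P = R := CFC.sqrt_mul_sqrt_self R hR.nonneg
  have hQ : IsSelfAdjoint Q := hP.isSelfAdjoint.ringInverse
  have hK : IsSelfAdjoint K := by
    simp only [K, IsSelfAdjoint, star_mul, hQ.star_eq, S, (ℑ T).2.star_eq, mul_assoc]
  have hfac : T = P * (1 + I • K) * P := calc
    T = R + I • S := (realPart_add_I_smul_imaginaryPart T).symm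
    _ = P * P + I • ((P * Q) * S * (Q * P)) := by rw [hPP, hPQ, hQP, one_mul, mul_one]
    _ = P * (1 + I • K) * P := by
      simp only [K, mul_add, add_mul, mul_smul_comm, smul_mul_assoc, mul_one, mul_assoc]
  have hKc : ‖K‖ ≤ c := by
    refine hK.norm_le_of_abs_re_inner_le hc fun y => ?_
    set x := Q y
    have hPx : P x = y := by simpa using DFunLike.congr_fun hPQ y
    have hKy : ⟪y, K y⟫ = ⟪x, S x⟫ := hQ.isSymmetric y (S x) |>.symm
    have hRx : ⟪x, R x⟫ = ⟪y, y⟫ := by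
      rw [← hPP, ← hPx]
      exact (hP.isSelfAdjoint.isSymmetric x (P x)).symm
    calc |(⟪y, K y⟫).re| = |(⟪x, T x⟫).im| := by rw [hKy, re_inner_map_self_imaginaryPart]
      _ ≤ c * (⟪x, T x⟫).re := hsec x
      _ = c * ‖y‖ ^ 2 := by rw [← re_inner_map_self_realPart, hRx, ← RCLike.re_to_complex,
        inner_self_eq_norm_sq]
  calc ‖T‖ = ‖P * (1 + I • K) * P‖ := by rw [← hfac]
    _ ≤ ‖P‖ * ‖1 + I • K‖ * ‖P‖ := by grw [norm_mul_le, norm_mul_le]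
    _ = ‖1 + I • K‖ * ‖R‖ := by
      have hRnorm : ‖R‖ = ‖P‖ * ‖P‖ := by
        rw [← hPP, ← CStarRing.norm_star_mul_self, hP.isSelfAdjoint.star_eq]
      rw [hRnorm]
      ring
    _ ≤ √(1 + c ^ 2) * ‖R‖ := by
      grw [norm_one_add_I_smul_le hK, hKc]
end ComplexHilbert

lemma sqrt_mul_le_heinzScal {a b : ℝ} (ha : 0 ≤ a) (hb : 0 ≤ b) (t : ℝ) :
    √(a * b) ≤ heinzScal a b t := by
  have hprod : (a ^ (1 - t) * b ^ t) * (a ^ t * b ^ (1 - t)) = a * b := by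
    rw [mul_mul_mul_comm, ← Real.rpow_add' ha (by norm_num), ← Real.rpow_add' hb (by norm_num),
      sub_add_cancel, add_sub_cancel, Real.rpow_one, Real.rpow_one]
  rw [← hprod, heinzScal, Real.sqrt_le_iff]
  constructor
  · positivity
  · nlinarith [sq_nonneg (a ^ (1 - t) * b ^ t - a ^ t * b ^ (1 - t))]

section NumericalRadius
open ComplexStarModule
open scoped MatrixOrder InnerProductSpace
variable {n : ℕ}

lemma nradius_nonneg (A : Matrix (Fin n) (Fin n) ℂ) : 0 ≤ nradius A :=
  Real.sSup_nonneg <| by rintro _ ⟨x, -, rfl⟩; exact norm_nonneg _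

lemma nradius_le_opNorm (A : Matrix (Fin n) (Fin n) ℂ) :
    nradius A ≤ ‖toEuclideanCLM (𝕜 := ℂ) A‖ :=
  Real.sSup_le (by rintro _ ⟨x, hx, rfl⟩; exact norm_inner_map_self_le_opNorm _ hx) (norm_nonneg _)

lemma norm_inner_le_nradius_mul_sq (A : Matrix (Fin n) (Fin n) ℂ) (x : EuclideanSpace ℂ (Fin n)) :
    ‖⟪x, toEuclideanCLM (𝕜 := ℂ) A x⟫_ℂ‖ ≤ nradius A * ‖x‖ ^ 2 := by
  rcases eq_or_ne x 0 with rfl | hx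
  · simp
  obtain ⟨u, hu, hxu⟩ := exists_norm_eq_one_inner_map_self_eq (toEuclideanCLM (𝕜 := ℂ) A) hx
  have hbdd : BddAbove {r : ℝ | ∃ x : EuclideanSpace ℂ (Fin n), ‖x‖ = 1 ∧
      r = ‖⟪x, toEuclideanCLM (𝕜 := ℂ) A x⟫_ℂ‖} :=
    ⟨_, by rintro _ ⟨x, hx, rfl⟩; exact norm_inner_map_self_le_opNorm _ hx⟩
  rw [hxu, norm_smul, Real.norm_of_nonneg (by positivity), mul_comm]
  exact mul_le_mul_of_nonneg_right (le_csSup hbdd ⟨u, hu, rfl⟩) (by positivity)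

namespace InSector
variable {α : ℝ} {A : Matrix (Fin n) (Fin n) ℂ}

lemma abs_im_le (hA : InSector α A) (x : EuclideanSpace ℂ (Fin n)) :
    |(⟪x, toEuclideanCLM (𝕜 := ℂ) A x⟫_ℂ).im| ≤
      Real.tan α * (⟪x, toEuclideanCLM (𝕜 := ℂ) A x⟫_ℂ).re := by
  rcases eq_or_ne x 0 with rfl | hx
  · simp
  obtain ⟨u, hu, hxu⟩ := exists_norm_eq_one_inner_map_self_eq (toEuclideanCLM (𝕜 := ℂ) A) hx
  rw [hxu, Complex.smul_re, Complex.smul_im, smul_eq_mul, smul_eq_mul, abs_mul,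
    abs_of_nonneg (by positivity), mul_left_comm]
  exact mul_le_mul_of_nonneg_left (hA.2 u hu) (by positivity)

lemma isStrictlyPositive_realPart (hA : InSector α A) :
    IsStrictlyPositive (ℜ (toEuclideanCLM (𝕜 := ℂ) A) :
      EuclideanSpace ℂ (Fin n) →L[ℂ] EuclideanSpace ℂ (Fin n)) := by
  have hRe : (ℜ (toEuclideanCLM (𝕜 := ℂ) A) :
      EuclideanSpace ℂ (Fin n) →L[ℂ] EuclideanSpace ℂ (Fin n)) =
      toEuclideanCLM (𝕜 := ℂ) (matRe A) := by
    rw [realPart_apply_coe, matRe, map_smul, map_add, ← Matrix.star_eq_conjTranspose, map_star,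
      one_div, ← Complex.ofReal_ofNat, ← Complex.ofReal_inv]
    exact RCLike.real_smul_eq_coe_smul (K := ℂ) _ _
  have hM := hA.1.isStrictlyPositive
  rw [hRe]
  exact ⟨by simpa using OrderHomClass.mono (toEuclideanCLM (𝕜 := ℂ) (n := Fin n)) hM.nonneg,
    hM.isUnit.map _⟩

lemma cos_mul_opNorm_le_nradius (hA : InSector α A) (hα0 : 0 ≤ α) (hα : α < Real.pi / 2) :
    Real.cos α * ‖toEuclideanCLM (𝕜 := ℂ) A‖ ≤ nradius A := by
  have hcos : 0 < Real.cos α := Real.cos_pos_of_mem_Ioo ⟨by linarith [Real.pi_pos], hα⟩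
  have htan : 0 ≤ Real.tan α := Real.tan_nonneg_of_nonneg_of_le_pi_div_two hα0 hα.le
  calc Real.cos α * ‖toEuclideanCLM (𝕜 := ℂ) A‖
      ≤ Real.cos α * (√(1 + Real.tan α ^ 2) * nradius A) := by
        grw [norm_le_sqrt_one_add_sq_mul_norm_realPart hA.isStrictlyPositive_realPart htan
          hA.abs_im_le, norm_realPart_le_of_norm_inner_le (nradius_nonneg A)
          (norm_inner_le_nradius_mul_sq A)]
    _ = nradius A := by
        rw [← mul_assoc, ← Real.inv_sqrt_one_add_tan_sq hcos,
          inv_mul_cancel₀ (by positivity), one_mul]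

end InSector

end NumericalRadius

theorem stmt19_general {n : ℕ} {α : ℝ} (hα0 : 0 ≤ α) (hα : α < Real.pi / 2)
    {A B : Matrix (Fin n) (Fin n) ℂ} (hA : InSector α A) (hB : InSector α B)
    {t : ℝ} :
    Real.cos α * nradius (A * B) ^ ((1 : ℝ) / 2) ≤
      heinzScal (nradius A) (nradius B) t := by
  have hcos : 0 < Real.cos α := Real.cos_pos_of_mem_Ioo ⟨by linarith [Real.pi_pos], hα⟩
  have hprod : Real.cos α ^ 2 * nradius (A * B) ≤ nradius A * nradius B := calc
    Real.cos α ^ 2 * nradius (A * B)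
        ≤ Real.cos α ^ 2 * (‖toEuclideanCLM (𝕜 := ℂ) A‖ * ‖toEuclideanCLM (𝕜 := ℂ) B‖) := by
      grw [nradius_le_opNorm, map_mul, norm_mul_le]
    _ = (Real.cos α * ‖toEuclideanCLM (𝕜 := ℂ) A‖) *
          (Real.cos α * ‖toEuclideanCLM (𝕜 := ℂ) B‖) := by ring
    _ ≤ nradius A * nradius B :=
      mul_le_mul (hA.cos_mul_opNorm_le_nradius hα0 hα) (hB.cos_mul_opNorm_le_nradius hα0 hα)
        (by positivity) (nradius_nonneg A)
  calc Real.cos α * nradius (A * B) ^ ((1 : ℝ) / 2) = √(Real.cos α ^ 2 * nradius (A * B)) := by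
        rw [Real.sqrt_mul' _ (nradius_nonneg _), Real.sqrt_sq hcos.le, Real.sqrt_eq_rpow]
    _ ≤ √(nradius A * nradius B) := Real.sqrt_le_sqrt hprod
    _ ≤ heinzScal (nradius A) (nradius B) t :=
      sqrt_mul_le_heinzScal (nradius_nonneg A) (nradius_nonneg B) t

theorem stmt19 {n : ℕ} (hn : 1 ≤ n) {α : ℝ} (hα0 : 0 ≤ α) (hα : α < Real.pi / 2)
    {A B : Matrix (Fin n) (Fin n) ℂ} (hA : InSector α A) (hB : InSector α B)
    {t : ℝ} (ht : t ∈ Set.Ioo (0 : ℝ) 1) :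
    Real.cos α * nradius (A * B) ^ ((1 : ℝ) / 2) ≤
      heinzScal (nradius A) (nradius B) t :=
  stmt19_general hα0 hα hA hB
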